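/- Let T and T' be ordered trees with the same number of vertices such that rpl(T) = 1, T' has the pony-tail, and T' is copying T. Then C(T',1) is copying C(T,2). -/
import Mathlib


/-- An ordered (plane) tree: a root together with the list of subtrees of its
children.  The children are listed **rightmost first** (so the head of the
list is the rightmost child). -/
inductive OTree : Type
  | node : List OTree → OTree

namespace OTree

-- Number of vertices of an ordered tree.
mutual
  def size : OTree → ℕ
    | .node ts => 1 + sizeAux ts
  def sizeAux : List OTree → ℕ
    | [] => 0
    | t :: ts => size t + sizeAux ts
end

/-- `rpl T` is the number of edges of the rightmost path of `T`
(the path from the root that always follows the rightmost child). -/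
def rpl : OTree → ℕ
  | .node [] => 0
  | .node (t :: _) => 1 + rpl t

/-- `p T` removes the rightmost leaf of `T` (the endpoint of the rightmost
path).  On the one-vertex tree it is the identity (junk value). -/
def p : OTree → OTree
  | .node [] => .node []
  | .node (.node [] :: ts) => .node ts
  | .node (.node (c :: cs) :: ts) => .node (p (.node (c :: cs)) :: ts)

/-- `C T i` appends a new leaf as the rightmost child of the vertex at
level `i` on the rightmost path of `T` (the root has level 1).
Junk values are returned when `i = 0` or `i` exceeds `rpl T + 1`. -/
def C : OTree → ℕ → OTree
  | t, 0 => t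
  | .node ts, 1 => .node (.node [] :: ts)
  | .node [], _ + 2 => .node []
  | .node (t :: ts), n + 2 => .node (C t (n + 1) :: ts)

/-- The number of children of the parent of the rightmost leaf
(junk value `0` on the one-vertex tree, which has no such parent). -/
def rmlParentDeg : OTree → ℕ
  | .node [] => 0
  | .node (.node [] :: ts) => ts.length + 1
  | .node (.node (c :: cs) :: _) => rmlParentDeg (.node (c :: cs))

/-- `T` has the pony-tail if the rightmost child of the root has exactly one
child, which is a leaf. -/
def ponyTail : OTree → Prop
  | .node (.node [.node []] :: _) => True
  | _ => False

end OTree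

/-- `AppendLeaf T T'` holds when `T'` is obtained from `T` by attaching one
new leaf to some vertex of `T`, at some position among its children. -/
inductive AppendLeaf : OTree → OTree → Prop
  | root (l r : List OTree) :
      AppendLeaf (.node (l ++ r)) (.node (l ++ OTree.node [] :: r))
  | child (l r : List OTree) (t t' : OTree) :
      AppendLeaf t t' → AppendLeaf (.node (l ++ t :: r)) (.node (l ++ t' :: r))

/-- `DelApp T T'` holds when `T'` can be obtained from `T` by deleting one
leaf and then appending one new leaf somewhere (delete-and-append a leaf). -/
def DelApp (T T' : OTree) : Prop :=
  ∃ S : OTree, AppendLeaf S T ∧ AppendLeaf S T'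

/-- `CopyingAt T T' j` : `T` is copying `T'` at level `j`, i.e. `T'` is
obtained from `T` by appending a new leaf which becomes the rightmost leaf of
`T'` (namely forming `C T j`, whose rightmost path has `j` edges) and then
removing some other leaf. -/
def CopyingAt (T T' : OTree) (j : ℕ) : Prop :=
  T ≠ T' ∧ 1 ≤ j ∧ j ≤ T.rpl + 1 ∧ T'.rpl = j ∧ AppendLeaf T' (T.C j)

/-- `T` is copying `T'`. -/
def Copying (T T' : OTree) : Prop := ∃ j : ℕ, CopyingAt T T' j


lemma appendLeaf_inv {S T : OTree} (h : AppendLeaf S T) :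
    (∃ l r, S = .node (l ++ r) ∧ T = .node (l ++ OTree.node [] :: r)) ∨
    (∃ l r t t', AppendLeaf t t' ∧ S = .node (l ++ t :: r) ∧ T = .node (l ++ t' :: r)) := by
  cases h with
  | root l r => exact Or.inl ⟨l, r, rfl, rfl⟩
  | child l r t t' h => exact Or.inr ⟨l, r, t, t', h, rfl, rfl⟩

lemma not_appendLeaf_leaf (t : OTree) : ¬ AppendLeaf t (.node []) := by
  intro h
  rcases appendLeaf_inv h with ⟨l, r, _, hT⟩ | ⟨l, r, a, b, _, _, hT⟩ <;>
    · injection hT with h'; simp at h'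

lemma appendLeaf_of_leaf {t' : OTree} (h : AppendLeaf (.node []) t') :
    t' = .node [.node []] := by
  rcases appendLeaf_inv h with ⟨l, r, hS, hT⟩ | ⟨l, r, a, b, _, hS, hT⟩
  · injection hS with h'
    rcases List.append_eq_nil_iff.mp h'.symm with ⟨rfl, rfl⟩
    simpa using hT
  · injection hS with h'; simp at h'

lemma appendLeaf_to_single {t : OTree} (h : AppendLeaf t (.node [.node []])) :
    t = .node [] := by
  rcases appendLeaf_inv h with ⟨l, r, hS, hT⟩ | ⟨l, r, a, b, hab, hS, hT⟩
  · injection hT with h'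
    rcases l with _ | ⟨x, l⟩
    · simp at h'
      rcases h' with ⟨-, rfl⟩
      simpa using hS
    · exfalso
      simp at h'
  · exfalso
    injection hT with h'
    rcases l with _ | ⟨x, l⟩
    · simp at h'
      rcases h' with ⟨rfl, rfl⟩
      exact not_appendLeaf_leaf _ hab
    · simp at h'


/-- Let `T` and `T'` be ordered trees with the same number of vertices such
that `rpl T = 1`, `T'` has the pony-tail, and `T'` is copying `T`.
Then `C T' 1` is copying `C T 2`. -/
theorem stmt_18 (T T' : OTree) (hsize : T.size = T'.size) (h1 : T.rpl = 1)
    (hpt : T'.ponyTail) (hcopy : Copying T' T) :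
    Copying (T'.C 1) (T.C 2) := by
  obtain ⟨j, hne, hj1, hjle, hrpl, hA⟩ := hcopy
  have hj : j = 1 := by rw [h1] at hrpl; omega
  subst hj
  have hC1 : ∀ vs, OTree.C (.node vs) 1 = .node (.node [] :: vs) := by
    intro vs; rw [OTree.C.eq_def]
  have hC2 : ∀ t vs, OTree.C (.node (t :: vs)) 2 = .node (t.C 1 :: vs) := by
    intro t vs; rw [OTree.C.eq_def]
  have hTe : ∃ ts, T = OTree.node (OTree.node [] :: ts) := by
    rcases T with ⟨_ | ⟨⟨_ | ⟨c, cs⟩⟩, ts⟩⟩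
    · simp [OTree.rpl] at h1
    · exact ⟨ts, rfl⟩
    · simp [OTree.rpl] at h1
  obtain ⟨ts, rfl⟩ := hTe
  have hTe' : ∃ us, T' = OTree.node (OTree.node [OTree.node []] :: us) := by
    rcases T' with ⟨_ | ⟨⟨_ | ⟨⟨_ | ⟨k, ks⟩⟩, _ | ⟨m, ms⟩⟩⟩, us⟩⟩
    · exact hpt.elim
    · exact hpt.elim
    · exact ⟨us, rfl⟩
    · exact hpt.elim
    · exact hpt.elim
    · exact hpt.elim
  obtain ⟨us, rfl⟩ := hTe'
  clear hpt hne hj1 hjle hrpl h1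
  rw [hC1] at hA
  refine ⟨2, ?_, by norm_num, ?_, ?_, ?_⟩
  · rw [hC1, hC2, hC1]
    intro h
    simp at h
  · rw [hC1]
    simp [OTree.rpl]
  · rw [hC2, hC1]
    simp [OTree.rpl]
  · rw [hC1, hC2, hC1, hC2, hC1]
    -- hA : AppendLeaf (node (node [] :: ts)) (node (node [] :: node [node []] :: us))
    -- goal : AppendLeaf (node (node [node []] :: ts))
    --        (node (node [node []] :: node [node []] :: us))
    rcases appendLeaf_inv hA with ⟨l, r, hS, hT⟩ | ⟨l, r, t, t', hh, hS, hT⟩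
    · injection hS with h2
      injection hT with h3
      rcases l with _ | ⟨a, l⟩
      · simp only [List.nil_append] at h2 h3
        rw [← h2] at h3
        simp at h3
      · simp only [List.cons_append, List.cons.injEq] at h2 h3
        obtain ⟨rfl, h3⟩ := h3
        rcases l with _ | ⟨b, l⟩
        · simp at h3
        · simp only [List.cons_append, List.cons.injEq] at h3
          obtain ⟨rfl, rfl⟩ := h3
          obtain ⟨-, rfl⟩ := h2
          have := AppendLeaf.root
            (OTree.node [OTree.node []] :: OTree.node [OTree.node []] :: l) r
          simpa using this
    · injection hS with h2
      injection hT with h3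
      rcases l with _ | ⟨a, l⟩
      · simp only [List.nil_append, List.cons.injEq] at h2 h3
        obtain ⟨rfl, rfl⟩ := h2
        obtain ⟨h4, rfl⟩ := h3
        have := appendLeaf_of_leaf hh
        rw [this] at h4
        simp at h4
      · simp only [List.cons_append, List.cons.injEq] at h2 h3
        obtain ⟨rfl, h2⟩ := h2
        rcases l with _ | ⟨b, l⟩
        · simp only [List.nil_append, List.cons.injEq] at h2 h3
          obtain ⟨-, rfl, rfl⟩ := h3
          obtain rfl := h2
          have ht := appendLeaf_to_single hh
          subst ht
          have base : AppendLeaf (.node []) (.node [.node []]) := by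
            have := AppendLeaf.root ([] : List OTree) []
            simpa using this
          have := AppendLeaf.child [OTree.node [OTree.node []]] us _ _ base
          simpa using this
        · simp only [List.cons_append, List.cons.injEq] at h2 h3
          obtain ⟨-, rfl, rfl⟩ := h3
          obtain rfl := h2
          have := AppendLeaf.child
            (OTree.node [OTree.node []] :: OTree.node [OTree.node []] :: l) r _ _ hh
          simpa using this
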